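/- arXiv:2306.02338 — 2 statements merged into one kernel-verified Lean document; each statement's English description precedes it below -/
import Mathlib

section
/- Let G = (V, E) be a finite simple undirected graph with n = |V|, ℓ : V → C a coloring, α a real number with 1/|C| ≤ α ≤ 1, and γ ∈ [0,1]. Assume α(V) ≤ α, and let OPT = max{ d(T) : ∅ ≠ T ⊆ V, α(T) ≤ α }. If S ⊆ V satisfies |S| ≥ ⌈1/α⌉ and d(S) ≥ γ · max{ d(T) : T ⊆ V, |T| ≥ ⌈1/α⌉ }, then there exists T with S ⊆ T ⊆ V such that α(T) ≤ α and d(T) ≥ γ · max{ 1/⌈1/α⌉, 1/(α·n) } · OPT. -/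
/-!
Let `m = c_max(S)`. Filling every color class `S_c` up to `min(|V_c|, m)` nodes of `V_c` gives a
set in which no color exceeds `m` and which, since every `|V_c| ≤ αn`, has at least `m/α` nodes;
any `T ⊇ S` inside it of size `max(|S|, ⌈m/α⌉)` is then α-diverse. As `m ≤ |S|`, this `T` has
`|T| ≤ ⌈1/α⌉·|S|` and `|T| ≤ n ≤ αn·|S|`, so `d(T) ≥ (|S|/|T|)·d(S)` loses at most the factor
`max{1/⌈1/α⌉, 1/(αn)}`. Finally `OPT` is bounded by the densest at-least-`⌈1/α⌉` subgraph, since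
a diverse set has at least `⌈1/α⌉` nodes.
-/

open Finset

/-- The set of edges of `G` with both endpoints in `S`. -/
def edgesIn {V : Type*} [Fintype V] [DecidableEq V] (G : SimpleGraph V) [DecidableRel G.Adj]
    (S : Finset V) : Finset (Sym2 V) :=
  G.edgeFinset.filter (fun e => ∀ v ∈ e, v ∈ S)

/-- The (degree) density `d(S) = |E(S)|/|S|`. -/
noncomputable def density {V : Type*} [Fintype V] [DecidableEq V] (G : SimpleGraph V)
    [DecidableRel G.Adj] (S : Finset V) : ℝ :=
  ((edgesIn G S).card : ℝ) / S.card

/-- `S_c`, the set of nodes of `S` with color `c`. -/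
def colorClass {V C : Type*} [DecidableEq V] [DecidableEq C] (ℓ : V → C) (S : Finset V) (c : C) :
    Finset V := S.filter (fun v => ℓ v = c)

/-- `c_max(S)`, the maximum number of nodes of `S` sharing a single color. -/
def cmax {V C : Type*} [DecidableEq V] [Fintype C] [DecidableEq C] (ℓ : V → C) (S : Finset V) : ℕ :=
  Finset.univ.sup (fun c => (colorClass ℓ S c).card)

/-- `α(S) = c_max(S)/|S|`, the maximum fraction of monochromatic nodes in `S`. -/
noncomputable def alphaOf {V C : Type*} [DecidableEq V] [Fintype C] [DecidableEq C]
    (ℓ : V → C) (S : Finset V) : ℝ := (cmax ℓ S : ℝ) / S.card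

section

variable {V C : Type*} [DecidableEq V]

section Density

variable [Fintype V] (G : SimpleGraph V) [DecidableRel G.Adj]

theorem edgesIn_mono {S T : Finset V} (hST : S ⊆ T) : edgesIn G S ⊆ edgesIn G T :=
  Finset.monotone_filter_right _ fun _ _ h v hv => hST (h v hv)

theorem density_nonneg (S : Finset V) : 0 ≤ density G S := by
  unfold density; positivity

theorem card_div_card_mul_density_le {S T : Finset V} (hST : S ⊆ T) :
    (S.card / T.card : ℝ) * density G S ≤ density G T := by
  rcases S.eq_empty_or_nonempty with rfl | hS
  · simp [density_nonneg]
  have hE : ((edgesIn G S).card : ℝ) ≤ (edgesIn G T).card := by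
    exact_mod_cast Finset.card_le_card (edgesIn_mono G hST)
  calc (S.card / T.card : ℝ) * density G S = (edgesIn G S).card / T.card := by
        unfold density; field_simp
    _ ≤ density G T := by unfold density; gcongr

theorem bddAbove_density (P : Finset V → Prop) :
    BddAbove {x : ℝ | ∃ T : Finset V, P T ∧ density G T = x} :=
  ((Set.finite_range (density G)).subset <| by rintro _ ⟨T, -, rfl⟩; exact ⟨T, rfl⟩).bddAbove

end Density

section Colors

variable [DecidableEq C] (ℓ : V → C)

theorem colorClass_mono {S T : Finset V} (hST : S ⊆ T) (c : C) :
    colorClass ℓ S c ⊆ colorClass ℓ T c :=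
  Finset.filter_subset_filter _ hST

variable [Fintype C]

theorem sum_card_colorClass (S : Finset V) : ∑ c, (colorClass ℓ S c).card = S.card :=
  (Finset.card_eq_sum_card_fiberwise fun v _ => Finset.mem_univ (ℓ v)).symm

theorem cmax_le_iff {S : Finset V} {m : ℕ} : cmax ℓ S ≤ m ↔ ∀ c, (colorClass ℓ S c).card ≤ m := by
  simp [cmax, Finset.sup_le_iff]

theorem card_colorClass_le_cmax (S : Finset V) (c : C) : (colorClass ℓ S c).card ≤ cmax ℓ S :=
  (cmax_le_iff ℓ).mp le_rfl c

theorem cmax_mono {S T : Finset V} (hST : S ⊆ T) : cmax ℓ S ≤ cmax ℓ T :=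
  (cmax_le_iff ℓ).mpr fun c =>
    (Finset.card_le_card (colorClass_mono ℓ hST c)).trans (card_colorClass_le_cmax ℓ T c)

theorem cmax_le_card (S : Finset V) : cmax ℓ S ≤ S.card :=
  (cmax_le_iff ℓ).mpr fun _ => Finset.card_filter_le _ _

theorem one_le_cmax {S : Finset V} (hS : S.Nonempty) : 1 ≤ cmax ℓ S := by
  obtain ⟨v, hv⟩ := hS
  have hv' : v ∈ colorClass ℓ S (ℓ v) := Finset.mem_filter.mpr ⟨hv, rfl⟩
  exact (Finset.card_pos.mpr ⟨v, hv'⟩).trans_le (card_colorClass_le_cmax ℓ S (ℓ v))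

theorem cmax_le_mul_card_of_alphaOf_le {S : Finset V} {α : ℝ} (h : alphaOf ℓ S ≤ α) :
    (cmax ℓ S : ℝ) ≤ α * S.card := by
  rcases S.eq_empty_or_nonempty with rfl | hS
  · simpa using cmax_le_card ℓ (∅ : Finset V)
  rwa [alphaOf, div_le_iff₀ (by exact_mod_cast hS.card_pos)] at h

theorem alphaOf_le_of_cmax_le_mul_card {S : Finset V} {α : ℝ} (hα : 0 ≤ α)
    (h : (cmax ℓ S : ℝ) ≤ α * S.card) : alphaOf ℓ S ≤ α := by
  rcases S.eq_empty_or_nonempty with rfl | hS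
  · simpa [alphaOf] using hα
  rwa [alphaOf, div_le_iff₀ (by exact_mod_cast hS.card_pos)]

theorem alphaOf_pos {S : Finset V} (hS : S.Nonempty) : 0 < alphaOf ℓ S := by
  have := one_le_cmax ℓ hS
  have := hS.card_pos
  unfold alphaOf; positivity

theorem ceil_one_div_le_card_of_alphaOf_le {S : Finset V} {α : ℝ} (hS : S.Nonempty)
    (h : alphaOf ℓ S ≤ α) : ⌈1 / α⌉₊ ≤ S.card := by
  have hα : 0 < α := (alphaOf_pos ℓ hS).trans_le h
  have h1 : (1 : ℝ) ≤ α * S.card :=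
    le_trans (by exact_mod_cast one_le_cmax ℓ hS) (cmax_le_mul_card_of_alphaOf_le ℓ h)
  exact Nat.ceil_le.mpr ((div_le_iff₀ hα).mpr (by linarith))

end Colors

section BalancedSuperset

variable [DecidableEq C] [Fintype C] (ℓ : V → C)

theorem Nat.mul_le_mul_min_of_le {a m A : ℕ} (ha : a ≤ A) (hm : m ≤ A) : a * m ≤ A * min a m := by
  rcases le_total a m with h | h
  · rw [min_eq_left h, mul_comm A]; exact Nat.mul_le_mul_left a hm
  · rw [min_eq_right h]; exact Nat.mul_le_mul_right m ha

theorem colorClass_biUnion_of_subset {W : Finset V} {U : C → Finset V}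
    (hU : ∀ c, U c ⊆ colorClass ℓ W c) (c : C) : colorClass ℓ (univ.biUnion U) c = U c := by
  ext v
  simp only [colorClass, mem_filter, mem_biUnion, mem_univ, true_and]
  constructor
  · rintro ⟨⟨c', hv⟩, rfl⟩
    rwa [(mem_filter.mp (hU c' hv)).2]
  · exact fun hv => ⟨⟨c, hv⟩, (mem_filter.mp (hU c hv)).2⟩

theorem exists_superset_cmax_le_of_subset {S W : Finset V} {m : ℕ} (hSW : S ⊆ W)
    (hS : cmax ℓ S ≤ m) (hW : m ≤ cmax ℓ W) :
    ∃ U, S ⊆ U ∧ U ⊆ W ∧ cmax ℓ U ≤ m ∧ m * W.card ≤ cmax ℓ W * U.card := by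
  have hex : ∀ c, ∃ u, colorClass ℓ S c ⊆ u ∧ u ⊆ colorClass ℓ W c ∧
      u.card = min (colorClass ℓ W c).card m := fun c =>
    exists_subsuperset_card_eq (colorClass_mono ℓ hSW c)
      (le_min (card_le_card (colorClass_mono ℓ hSW c)) ((cmax_le_iff ℓ).mp hS c)) (min_le_left _ _)
  choose Uc hSUc hUcW hUc using hex
  have hclass := colorClass_biUnion_of_subset ℓ hUcW
  refine ⟨univ.biUnion Uc, fun v hv => ?_, ?_, ?_, ?_⟩
  · exact mem_biUnion.mpr ⟨ℓ v, mem_univ _, hSUc _ (mem_filter.mpr ⟨hv, rfl⟩)⟩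
  · exact biUnion_subset.mpr fun c _ => (hUcW c).trans (filter_subset _ _)
  · exact (cmax_le_iff ℓ).mpr fun c => by rw [hclass, hUc]; exact min_le_right _ _
  · calc m * W.card = ∑ c, (colorClass ℓ W c).card * m := by
          rw [← sum_card_colorClass ℓ W, mul_comm, sum_mul]
      _ ≤ ∑ c, cmax ℓ W * min (colorClass ℓ W c).card m := sum_le_sum fun c _ =>
          Nat.mul_le_mul_min_of_le (card_colorClass_le_cmax ℓ W c) hW
      _ = cmax ℓ W * (univ.biUnion Uc).card := by
          rw [← sum_card_colorClass ℓ (univ.biUnion Uc), mul_sum]; simp only [hclass, hUc]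

theorem exists_superset_alphaOf_le_card_le [Fintype V] {α : ℝ} (hα : 0 < α)
    (hV : alphaOf ℓ (univ : Finset V) ≤ α) (S : Finset V) :
    ∃ T, S ⊆ T ∧ alphaOf ℓ T ≤ α ∧ T.card ≤ max S.card ⌈cmax ℓ S / α⌉₊ := by
  set m := cmax ℓ S
  obtain ⟨U, hSU, -, hUm, hmU⟩ := exists_superset_cmax_le_of_subset ℓ (subset_univ S) le_rfl
    (cmax_mono ℓ (subset_univ S))
  have hmU' : (m : ℝ) * (univ : Finset V).card ≤ α * U.card * (univ : Finset V).card :=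
    calc (m : ℝ) * (univ : Finset V).card ≤ cmax ℓ (univ : Finset V) * U.card := by
          exact_mod_cast hmU
      _ ≤ α * (univ : Finset V).card * U.card := by
          gcongr; exact cmax_le_mul_card_of_alphaOf_le ℓ hV
      _ = α * U.card * (univ : Finset V).card := by ring
  have hmα : (m : ℝ) ≤ α * U.card := by
    rcases (univ : Finset V).eq_empty_or_nonempty with hV0 | hV0
    · have : m = 0 := Nat.eq_zero_of_le_zero <|
        (cmax_mono ℓ (subset_univ S)).trans (hV0 ▸ cmax_le_card ℓ _)
      rw [this, Nat.cast_zero]; positivity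
    · exact le_of_mul_le_mul_right hmU' (by exact_mod_cast hV0.card_pos)
  have hceil : ⌈(m : ℝ) / α⌉₊ ≤ U.card := Nat.ceil_le.mpr (by rw [div_le_iff₀ hα]; linarith)
  obtain ⟨T, hST, hTU, hT⟩ :=
    exists_subsuperset_card_eq hSU (le_max_left _ _) (max_le (card_le_card hSU) hceil)
  refine ⟨T, hST, alphaOf_le_of_cmax_le_mul_card ℓ hα.le ?_, hT.le⟩
  calc (cmax ℓ T : ℝ) ≤ m := by exact_mod_cast (cmax_mono ℓ hTU).trans hUm
    _ ≤ α * ⌈(m : ℝ) / α⌉₊ := by rw [← div_le_iff₀' hα]; exact Nat.le_ceil _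
    _ ≤ α * T.card := by gcongr; rw [hT]; exact_mod_cast le_max_right _ _

end BalancedSuperset

theorem max_ceil_div_le_ceil_one_div_mul {α : ℝ} (hα : 0 < α) {m s : ℕ} (hms : m ≤ s) :
    max s ⌈(m : ℝ) / α⌉₊ ≤ ⌈1 / α⌉₊ * s := by
  have hk : 1 ≤ ⌈1 / α⌉₊ := Nat.one_le_ceil_iff.mpr (by positivity)
  refine max_le (Nat.le_mul_of_pos_left s hk) (Nat.ceil_le.mpr ?_)
  calc (m : ℝ) / α = m * (1 / α) := by ring
    _ ≤ s * ⌈1 / α⌉₊ := by gcongr; exact Nat.le_ceil _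
    _ = ((⌈1 / α⌉₊ * s : ℕ) : ℝ) := by push_cast; ring

theorem max_one_div_le_div {α k n s t : ℝ} (hα : 0 < α) (ht : 0 < t) (hk : 1 / α ≤ k)
    (hks : k ≤ s) (htk : t ≤ k * s) (htn : t ≤ n) : max (1 / k) (1 / (α * n)) ≤ s / t := by
  have hk0 : 0 < k := (by positivity : (0 : ℝ) < 1 / α).trans_le hk
  have hn : 0 < n := ht.trans_le htn
  have hαs : 1 ≤ α * s := by rw [div_le_iff₀ hα] at hk; nlinarith
  refine max_le ((div_le_div_iff₀ hk0 ht).mpr (by linarith)) ?_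
  exact (div_le_div_iff₀ (by positivity) ht).mpr (by nlinarith)

end

theorem stmt5_general {V C : Type*} [Fintype V] [DecidableEq V] [Fintype C] [DecidableEq C]
    (G : SimpleGraph V) [DecidableRel G.Adj] (ℓ : V → C) (α : ℝ)
    (γ : ℝ) (hγ0 : 0 ≤ γ)
    (hV : alphaOf ℓ (Finset.univ : Finset V) ≤ α)
    (S : Finset V) (hScard : ⌈1 / α⌉₊ ≤ S.card)
    (hSdens : γ * sSup {x : ℝ | ∃ T : Finset V, ⌈1 / α⌉₊ ≤ T.card ∧ density G T = x}
      ≤ density G S) :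
    ∃ T : Finset V, S ⊆ T ∧ alphaOf ℓ T ≤ α ∧
      γ * max (1 / (⌈1 / α⌉₊ : ℝ)) (1 / (α * Fintype.card V)) *
        sSup {x : ℝ | ∃ T' : Finset V, T'.Nonempty ∧ alphaOf ℓ T' ≤ α ∧ density G T' = x}
      ≤ density G T := by
  set OPT := {x : ℝ | ∃ T' : Finset V, T'.Nonempty ∧ alphaOf ℓ T' ≤ α ∧ density G T' = x}
  rcases OPT.eq_empty_or_nonempty with hOPT | ⟨_, T₀, hT₀, hαT₀, -⟩
  · refine ⟨univ, subset_univ S, hV, ?_⟩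
    rw [hOPT, Real.sSup_empty, mul_zero]
    exact density_nonneg G univ
  have hα : 0 < α := (alphaOf_pos ℓ hT₀).trans_le hαT₀
  obtain ⟨T, hST, hαT, hT⟩ := exists_superset_alphaOf_le_card_le ℓ hα hV S
  have hTk := hT.trans (max_ceil_div_le_ceil_one_div_mul hα (cmax_le_card ℓ S))
  have hT0 : (0 : ℝ) < T.card := by
    have := Nat.one_le_ceil_iff.mpr (one_div_pos.mpr hα)
    exact_mod_cast (this.trans hScard).trans (card_le_card hST)
  set M := max (1 / (⌈1 / α⌉₊ : ℝ)) (1 / (α * Fintype.card V))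
  have hM : M ≤ S.card / T.card := max_one_div_le_div hα hT0 (Nat.le_ceil _)
    (by exact_mod_cast hScard) (by exact_mod_cast hTk) (by exact_mod_cast card_le_univ T)
  have hM0 : 0 ≤ M := le_max_of_le_left (by positivity)
  have hOPT_le : sSup OPT ≤ sSup {x : ℝ | ∃ T : Finset V, ⌈1 / α⌉₊ ≤ T.card ∧ density G T = x} :=
    csSup_le_csSup (bddAbove_density G _) ⟨_, T₀, hT₀, hαT₀, rfl⟩ <| by
      rintro _ ⟨T', hT', hαT', rfl⟩
      exact ⟨T', ceil_one_div_le_card_of_alphaOf_le ℓ hT' hαT', rfl⟩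
  refine ⟨T, hST, hαT, ?_⟩
  calc γ * M * sSup OPT ≤ M * density G S := by
        rw [mul_comm γ, mul_assoc]; gcongr
        exact (mul_le_mul_of_nonneg_left hOPT_le hγ0).trans hSdens
    _ ≤ S.card / T.card * density G S := by gcongr; exact density_nonneg G S
    _ ≤ density G T := card_div_card_mul_density_le G hST

/-- Approximation guarantee of Algorithm 2: a `γ`-approximate solution to DalkS with
`k = ⌈1/α⌉` extends to a diverse set `T` with
`d(T) ≥ γ · max{1/⌈1/α⌉, 1/(αn)} · OPT`. -/
theorem stmt5 {V C : Type*} [Fintype V] [DecidableEq V] [Fintype C] [DecidableEq C]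
    (G : SimpleGraph V) [DecidableRel G.Adj] (ℓ : V → C) (α : ℝ)
    (hα₁ : 1 / (Fintype.card C : ℝ) ≤ α) (hα₂ : α ≤ 1)
    (γ : ℝ) (hγ0 : 0 ≤ γ) (hγ1 : γ ≤ 1)
    (hV : alphaOf ℓ (Finset.univ : Finset V) ≤ α)
    (S : Finset V) (hScard : ⌈1 / α⌉₊ ≤ S.card)
    (hSdens : γ * sSup {x : ℝ | ∃ T : Finset V, ⌈1 / α⌉₊ ≤ T.card ∧ density G T = x}
      ≤ density G S) :
    ∃ T : Finset V, S ⊆ T ∧ alphaOf ℓ T ≤ α ∧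
      γ * max (1 / (⌈1 / α⌉₊ : ℝ)) (1 / (α * Fintype.card V)) *
        sSup {x : ℝ | ∃ T' : Finset V, T'.Nonempty ∧ alphaOf ℓ T' ≤ α ∧ density G T' = x}
      ≤ density G T :=
  stmt5_general G ℓ α γ hγ0 hV S hScard hSdens
end

section
/- Let G = (V, E) be a finite simple undirected graph, ℓ : V → C a coloring, and p = (p_c)_{c∈C} ∈ ℤ_{≥0}^{|C|} with ‖p‖₁ ≥ 1. For every S ⊆ V with |S_c| = p_c for every c ∈ C, there exists a feasible solution (x, y) of LP(p) whose objective value Σ_{e∈E} x_e is greater than or equal to d(S). -/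
open Finset

/-- Feasibility for the linear program `LP(p)`: `x_e ≤ y_u, x_e ≤ y_v` for every edge
`e = {u,v}`; `∑_{v ∈ V_c} y_v = p_c/‖p‖₁` for every color `c`; `y_v ≤ 1/‖p‖₁`; and
`x, y ≥ 0`. -/
def LPFeasible {V C : Type*} [Fintype V] [DecidableEq V] [Fintype C] [DecidableEq C]
    (G : SimpleGraph V) [DecidableRel G.Adj] (ℓ : V → C) (p : C → ℕ)
    (x : Sym2 V → ℝ) (y : V → ℝ) : Prop :=
  (∀ e ∈ G.edgeFinset, ∀ v ∈ e, x e ≤ y v) ∧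
  (∀ c : C, ∑ v ∈ Finset.univ.filter (fun v => ℓ v = c), y v
      = (p c : ℝ) / ((∑ c' : C, p c' : ℕ) : ℝ)) ∧
  (∀ v : V, y v ≤ 1 / ((∑ c' : C, p c' : ℕ) : ℝ)) ∧
  (∀ e ∈ G.edgeFinset, 0 ≤ x e) ∧
  (∀ v : V, 0 ≤ y v)

/-!
Put weight `1/|S|` on every vertex of `S` and on every edge of `E(S)`. Each color class then
carries `|S_c|/|S| = p_c/‖p‖₁`, each edge weight is bounded by its endpoints' weights, and the
objective is exactly `|E(S)|/|S| = d(S)`.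
-/

noncomputable section UniformSolution

variable {V C : Type*} [DecidableEq V] [DecidableEq C]

def uniformVertexWeight (S : Finset V) (v : V) : ℝ :=
  if v ∈ S then (#S : ℝ)⁻¹ else 0

lemma uniformVertexWeight_nonneg (S : Finset V) (v : V) : 0 ≤ uniformVertexWeight S v := by
  unfold uniformVertexWeight
  split_ifs <;> positivity

lemma uniformVertexWeight_le (S : Finset V) (v : V) :
    uniformVertexWeight S v ≤ (#S : ℝ)⁻¹ := by
  unfold uniformVertexWeight
  split_ifs <;> simp

lemma card_eq_sum_card_colorClass [Fintype C] (ℓ : V → C) (S : Finset V) :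
    #S = ∑ c, #(colorClass ℓ S c) :=
  card_eq_sum_card_fiberwise fun v _ => mem_univ (ℓ v)

variable [Fintype V]

def uniformEdgeWeight (G : SimpleGraph V) [DecidableRel G.Adj] (S : Finset V) (e : Sym2 V) : ℝ :=
  if e ∈ edgesIn G S then (#S : ℝ)⁻¹ else 0

lemma uniformEdgeWeight_nonneg (G : SimpleGraph V) [DecidableRel G.Adj] (S : Finset V)
    (e : Sym2 V) : 0 ≤ uniformEdgeWeight G S e := by
  unfold uniformEdgeWeight
  split_ifs <;> positivity

lemma uniformEdgeWeight_le_of_mem (G : SimpleGraph V) [DecidableRel G.Adj] (S : Finset V)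
    {e : Sym2 V} {v : V} (hv : v ∈ e) : uniformEdgeWeight G S e ≤ uniformVertexWeight S v := by
  unfold uniformEdgeWeight uniformVertexWeight
  split_ifs with he hvS
  · rfl
  · exact absurd ((mem_filter.mp he).2 v hv) hvS
  · positivity
  · rfl

lemma sum_uniformVertexWeight_color (ℓ : V → C) (S : Finset V) (c : C) :
    ∑ v ∈ univ.filter (fun v => ℓ v = c), uniformVertexWeight S v
      = #(colorClass ℓ S c) / #S := by
  have hfilter : (univ.filter fun v => ℓ v = c).filter (· ∈ S) = colorClass ℓ S c := by
    ext v
    simp [colorClass, and_comm]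
  simp only [uniformVertexWeight]
  rw [← sum_filter, hfilter, sum_const, nsmul_eq_mul, div_eq_mul_inv]

lemma sum_uniformEdgeWeight (G : SimpleGraph V) [DecidableRel G.Adj] (S : Finset V) :
    ∑ e ∈ G.edgeFinset, uniformEdgeWeight G S e = density G S := by
  have hfilter : G.edgeFinset.filter (· ∈ edgesIn G S) = edgesIn G S := by
    rw [filter_mem_eq_inter, inter_eq_right]
    exact filter_subset _ _
  simp only [uniformEdgeWeight]
  rw [← sum_filter, hfilter, sum_const, nsmul_eq_mul, density, div_eq_mul_inv]

end UniformSolution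

theorem stmt8_general {V C : Type*} [Fintype V] [DecidableEq V] [Fintype C] [DecidableEq C]
    (G : SimpleGraph V) [DecidableRel G.Adj] (ℓ : V → C) (p : C → ℕ)
    (S : Finset V) (hS : ∀ c : C, (colorClass ℓ S c).card = p c) :
    ∃ (x : Sym2 V → ℝ) (y : V → ℝ), LPFeasible G ℓ p x y ∧
      density G S ≤ ∑ e ∈ G.edgeFinset, x e := by
  have hcard : (∑ c : C, p c) = #S := by
    simp only [← hS, card_eq_sum_card_colorClass ℓ S]
  refine ⟨uniformEdgeWeight G S, uniformVertexWeight S,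
    ⟨fun e _ v hv => uniformEdgeWeight_le_of_mem G S hv, fun c => ?_,
      fun v => ?_, fun e _ => uniformEdgeWeight_nonneg G S e, uniformVertexWeight_nonneg S⟩,
    (sum_uniformEdgeWeight G S).ge⟩
  · rw [sum_uniformVertexWeight_color, hS, hcard]
  · rw [hcard, one_div]
    exact uniformVertexWeight_le S v

/-- For every `S ⊆ V` with `|S_c| = p_c` for each color `c`, there is a feasible solution of
`LP(p)` whose objective value is at least `d(S)`. -/
theorem stmt8 {V C : Type*} [Fintype V] [DecidableEq V] [Fintype C] [DecidableEq C]
    (G : SimpleGraph V) [DecidableRel G.Adj] (ℓ : V → C) (p : C → ℕ)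
    (hp : 1 ≤ ∑ c : C, p c)
    (S : Finset V) (hS : ∀ c : C, (colorClass ℓ S c).card = p c) :
    ∃ (x : Sym2 V → ℝ) (y : V → ℝ), LPFeasible G ℓ p x y ∧
      density G S ≤ ∑ e ∈ G.edgeFinset, x e :=
  stmt8_general G ℓ p S hS
end
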